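/- For n ≥ 1 and field elements s, a₁, ..., aₙ, let M be the n×n matrix with Mᵢᵢ = (s - aᵢ)² and Mᵢⱼ = aᵢ² for j ≠ i. Then det M = sⁿ · ∏ᵢ(s - 2aᵢ) + s^{n-1} · Σⱼ aⱼ² · ∏_{i ≠ j}(s - 2aᵢ). -/

import Mathlib

/-!
`M` is the rank-one perturbation `diagonal (s (s - 2aᵢ)) + (aᵢ²)ᵢ 𝟙ᵀ` of a diagonal matrix. The
matrix determinant lemma `det (A + u vᵀ) = det A + vᵀ (adj A) u` holds over any commutative ring,
with no invertibility assumption: adding the rank-one part one row at a time, each new row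
contributes `uᵢ det (A with row i replaced by v)`, because the rows added earlier differ from
those of `A` by multiples of `v`. For diagonal `A` the adjugate is diagonal with entries
`∏_{k ≠ i} d_k`, which gives the formula.
-/

open Finset

namespace Matrix

variable {n R : Type*} [Fintype n] [DecidableEq n] [CommRing R]

theorem det_add_vecMulVec_piecewise (A : Matrix n n R) (u v : n → R) (S : Finset n) :
    det (A + vecMulVec (S.piecewise u 0) v) = det A + ∑ i ∈ S, u i * det (A.updateRow i v) := by
  induction S using Finset.induction_on with
  | empty => simp
  | @insert i S hi ih =>
    set B := A + vecMulVec (S.piecewise u 0) v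
    have hB : A + vecMulVec ((insert i S).piecewise u 0) v = B.updateRow i (B i + u i • v) := by
      ext j k
      rcases eq_or_ne j i with rfl | hj
      · simp [B, vecMulVec_apply, hi]
      · simp [B, vecMulVec_apply, hj, piecewise_insert_of_ne]
    have hBA : det (B.updateRow i v) = det (A.updateRow i v) :=
      det_eq_of_forall_row_eq_smul_add_const (S.piecewise u 0) i (by simp [hi]) fun j k => by
        rcases eq_or_ne j i with rfl | hj
        · simp [hi]
        · simp [B, hj, vecMulVec_apply]
    rw [hB, det_updateRow_add, det_updateRow_smul, updateRow_eq_self, hBA, ih, sum_insert hi]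
    ring

theorem det_add_vecMulVec (A : Matrix n n R) (u v : n → R) :
    det (A + vecMulVec u v) = det A + v ⬝ᵥ (A.adjugate *ᵥ u) := by
  have h := det_add_vecMulVec_piecewise A u v univ
  rw [piecewise_univ] at h
  simp_rw [h, ← cramer_transpose_apply, cramer_eq_adjugate_mulVec, ← adjugate_transpose,
    dotProduct_mulVec, ← mulVec_transpose, dotProduct_comm _ u]
  rfl

theorem det_diagonal_add_vecMulVec (d u v : n → R) :
    det (diagonal d + vecMulVec u v) = ∏ i, d i + ∑ j, v j * u j * ∏ i ∈ univ.erase j, d i := by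
  simp only [det_add_vecMulVec, det_diagonal, adjugate_diagonal, mulVec_diagonal, dotProduct]
  congr 1
  exact sum_congr rfl fun j _ => by ring

end Matrix

open Finset Matrix

theorem corbin_determinant_numerator_general {K : Type*} [Field K] (n : ℕ)
    (s : K) (a : Fin n → K)
    (M : Matrix (Fin n) (Fin n) K)
    (hM : ∀ i j, M i j = if i = j then (s - a i) ^ 2 else (a i) ^ 2) :
    M.det = s ^ n * ∏ i, (s - 2 * a i) +
      s ^ (n - 1) * ∑ j, (a j) ^ 2 * ∏ i ∈ Finset.univ.erase j, (s - 2 * a i) := by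
  have hM' : M = diagonal (fun i => s * (s - 2 * a i)) + vecMulVec (fun i => a i ^ 2) 1 := by
    ext i j
    rcases eq_or_ne i j with rfl | hij
    · rw [hM, if_pos rfl, Matrix.add_apply, diagonal_apply_eq, vecMulVec_apply, Pi.one_apply]
      ring
    · rw [hM, if_neg hij, Matrix.add_apply, diagonal_apply_ne _ hij, vecMulVec_apply, Pi.one_apply,
        zero_add, mul_one]
  rw [hM', det_diagonal_add_vecMulVec, prod_mul_distrib, prod_const, card_univ, Fintype.card_fin,
    mul_sum]
  congr 1
  refine sum_congr rfl fun j _ => ?_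
  rw [prod_mul_distrib, prod_const, card_erase_of_mem (mem_univ j), card_univ, Fintype.card_fin,
    Pi.one_apply]
  ring

theorem corbin_determinant_numerator {K : Type*} [Field K] (n : ℕ) (hn : 1 ≤ n)
    (s : K) (a : Fin n → K)
    (M : Matrix (Fin n) (Fin n) K)
    (hM : ∀ i j, M i j = if i = j then (s - a i) ^ 2 else (a i) ^ 2) :
    M.det = s ^ n * ∏ i, (s - 2 * a i) +
      s ^ (n - 1) * ∑ j, (a j) ^ 2 * ∏ i ∈ Finset.univ.erase j, (s - 2 * a i) :=
  corbin_determinant_numerator_general n s a M hM
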